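/- Let m be odd with m ≥ 5, write m = 2k+1, and let K_{2m}* have vertex set X ∪ Y with X = {x_0,...,x_{2k}}, Y = {y_0,...,y_{2k}}. Define C_0 = x_0 y_0 x_1 y_1 ... x_k x_0 and C_0' = y_k x_{k+1} y_{k+1} ... y_{2k} y_k, and for i ∈ Z_m let C_i, C_i' be obtained from C_0, C_0' by adding i to all x-subscripts and 2i to all y-subscripts (mod m). Then for each i ∈ Z_m, the pair {C_i, C_i'} is a resolution class: C_i and C_i' are vertex-disjoint directed m-cycles that together cover all 2m vertices. -/

import Mathlib

/-! Every vertex lies on `C_i` or `C_i'`: writing `x_a = x_{d+i}` and `y_a = y_{d+2i}` with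
`0 ≤ d < m`, the vertex is on `C_i` for small `d` and on `C_i'` otherwise. The two
enumerations have `2m` positions in total and there are `2m` vertices, so covering forces
both enumerations to be injective with disjoint images. -/

/-- The cycle `C_i` of the Construction: `C_0 = x_0 y_0 x_1 y_1 … x_k x_0`
(at even positions `t = 2j` the vertex `x_j`, at odd positions `t = 2j+1` the
vertex `y_j`), shifted by adding `i` to `x`-subscripts and `2i` to
`y`-subscripts. Vertices `x_a` are `Sum.inl a`, vertices `y_a` are `Sum.inr a`. -/
def cycC (m k : ℕ) (i : ZMod m) : ZMod m → ZMod m ⊕ ZMod m := fun t =>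
  if t.val % 2 = 0 then Sum.inl (((t.val / 2 : ℕ) : ZMod m) + i)
  else Sum.inr (((t.val / 2 : ℕ) : ZMod m) + 2 * i)

/-- The cycle `C_i'` of the Construction: `C_0' = y_k x_{k+1} y_{k+1} … y_{2k} y_k`,
shifted by adding `i` to `x`-subscripts and `2i` to `y`-subscripts. -/
def cycC' (m k : ℕ) (i : ZMod m) : ZMod m → ZMod m ⊕ ZMod m := fun t =>
  if t.val % 2 = 0 then Sum.inr ((k : ZMod m) + ((t.val / 2 : ℕ) : ZMod m) + 2 * i)
  else Sum.inl ((k : ZMod m) + (((t.val + 1) / 2 : ℕ) : ZMod m) + i)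

open Finset

theorem injective_and_disjoint_range_of_range_union_eq_univ {α β : Type*} [Fintype α]
    [Fintype β] {f g : α → β} (hcover : Set.range f ∪ Set.range g = Set.univ)
    (hcard : Fintype.card β = 2 * Fintype.card α) :
    Function.Injective f ∧ Function.Injective g ∧ Disjoint (Set.range f) (Set.range g) := by
  classical
  have hunion : univ.image f ∪ univ.image g = univ := by
    simpa [← coe_inj] using hcover
  have hf : #(univ.image f) ≤ Fintype.card α := card_image_le
  have hg : #(univ.image g) ≤ Fintype.card α := card_image_le
  have hsum := card_union_le (univ.image f) (univ.image g)
  rw [hunion, card_univ, hcard] at hsum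
  have hinj {h : α → β} (hh : Fintype.card α ≤ #(univ.image h)) : Function.Injective h := by
    rw [← Set.injOn_univ, ← coe_univ, ← card_image_iff, card_univ]
    exact le_antisymm card_image_le hh
  refine ⟨hinj (by omega), hinj (by omega), ?_⟩
  have hdisj : Disjoint (univ.image f) (univ.image g) := by
    rw [← card_union_eq_card_add_card, hunion, card_univ]
    omega
  simpa [← disjoint_coe] using hdisj

section Construction

variable {m : ℕ} (k : ℕ) (i : ZMod m) {j : ℕ}

theorem cycC_two_mul (hj : 2 * j < m) : cycC m k i (2 * j : ℕ) = .inl (j + i) := by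
  simp only [cycC, ZMod.val_cast_of_lt hj]
  simp

theorem cycC_two_mul_add_one (hj : 2 * j + 1 < m) :
    cycC m k i (2 * j + 1 : ℕ) = .inr (j + 2 * i) := by
  simp only [cycC, ZMod.val_cast_of_lt hj]
  simp [Nat.add_mod, Nat.add_div]

theorem cycC'_two_mul (hj : 2 * j < m) : cycC' m k i (2 * j : ℕ) = .inr (k + j + 2 * i) := by
  simp only [cycC', ZMod.val_cast_of_lt hj]
  simp

theorem cycC'_two_mul_add_one (hj : 2 * j + 1 < m) :
    cycC' m k i (2 * j + 1 : ℕ) = .inl (k + (j + 1 : ℕ) + i) := by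
  simp only [cycC', ZMod.val_cast_of_lt hj]
  simp [Nat.add_mod, show (2 * j + 1 + 1) / 2 = j + 1 by omega]

theorem range_cycC_union_range_cycC' (hm : m = 2 * k + 1) :
    Set.range (cycC m k i) ∪ Set.range (cycC' m k i) = Set.univ := by
  have : NeZero m := ⟨by omega⟩
  refine Set.eq_univ_of_forall ?_
  rintro (a | a)
  · obtain ⟨d, hd, rfl⟩ : ∃ d < m, a = (d : ℕ) + i := ⟨(a - i).val, ZMod.val_lt _, by simp⟩
    rcases le_or_gt d k with hdk | hdk
    · exact .inl ⟨_, cycC_two_mul k i (by omega)⟩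
    · obtain ⟨j, rfl⟩ : ∃ j, d = k + (j + 1) := ⟨d - k - 1, by omega⟩
      exact .inr ⟨_, by rw [cycC'_two_mul_add_one k i (j := j) (by omega), Nat.cast_add k]⟩
  · obtain ⟨d, hd, rfl⟩ : ∃ d < m, a = (d : ℕ) + 2 * i :=
      ⟨(a - 2 * i).val, ZMod.val_lt _, by simp⟩
    rcases lt_or_ge d k with hdk | hdk
    · exact .inl ⟨_, cycC_two_mul_add_one k i (by omega)⟩
    · obtain ⟨j, rfl⟩ : ∃ j, d = k + j := ⟨d - k, by omega⟩
      exact .inr ⟨_, by rw [cycC'_two_mul k i (j := j) (by omega), Nat.cast_add k]⟩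

end Construction

theorem construction_resolution_class (m k : ℕ) (hm : m = 2 * k + 1)
    (i : ZMod m) :
    Function.Injective (cycC m k i) ∧ Function.Injective (cycC' m k i) ∧
    Disjoint (Set.range (cycC m k i)) (Set.range (cycC' m k i)) ∧
    Set.range (cycC m k i) ∪ Set.range (cycC' m k i) = Set.univ := by
  have : NeZero m := ⟨by omega⟩
  have hcover := range_cycC_union_range_cycC' k i hm
  obtain ⟨hinj, hinj', hdisj⟩ := injective_and_disjoint_range_of_range_union_eq_univ hcover
    (by rw [Fintype.card_sum, two_mul])
  exact ⟨hinj, hinj', hdisj, hcover⟩
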